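/- arXiv:1906.00731 — 3 statements merged into one kernel-verified Lean document; each statement's English description precedes it below -/
import Mathlib

section
/- For a real d×d matrix J whose symmetric part S = (J + Jᵀ)/2 satisfies S ⪰ √α · I (i.e., the smallest eigenvalue of S is at least √α) and whose largest singular value squared is at most β, and with step size γ = √α/β, one has (I − γJ)ᵀ(I − γJ) ⪯ (1 − α/β) I in the Loewner order. -/
/-!
Expanding the square, `(I - γJ)ᵀ(I - γJ) = I - 2γS + γ²JᵀJ`. The spectral bounds say
`√α I ⪯ S` and `JᵀJ ⪯ β I`, so for `γ ≥ 0` this is at most `(1 - 2γ√α + γ²β) I`, and the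
step size `γ = √α/β` minimises the coefficient, making it `1 - α/β`.
-/

open Matrix Finset
open scoped MatrixOrder

namespace Matrix

variable {n : Type*} [Fintype n] [DecidableEq n]

theorem IsHermitian.smul_one_le_of_le_eigenvalues {A : Matrix n n ℝ} (hA : A.IsHermitian) {c : ℝ}
    (h : ∀ i, c ≤ hA.eigenvalues i) : c • 1 ≤ A := by
  rw [← Algebra.algebraMap_eq_smul_one]
  refine algebraMap_le_of_le_spectrum fun x hx => ?_
  obtain ⟨i, rfl⟩ := hA.spectrum_real_eq_range_eigenvalues ▸ hx
  exact h i

theorem IsHermitian.le_smul_one_of_eigenvalues_le {A : Matrix n n ℝ} (hA : A.IsHermitian) {c : ℝ}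
    (h : ∀ i, hA.eigenvalues i ≤ c) : A ≤ c • 1 := by
  rw [← Algebra.algebraMap_eq_smul_one]
  refine le_algebraMap_of_spectrum_le fun x hx => ?_
  obtain ⟨i, rfl⟩ := hA.spectrum_real_eq_range_eigenvalues ▸ hx
  exact h i

theorem transpose_mul_one_sub_smul_le {J : Matrix n n ℝ} {a b γ : ℝ} (hγ : 0 ≤ γ)
    (ha : a • 1 ≤ (1 / 2 : ℝ) • (J + Jᵀ)) (hb : Jᵀ * J ≤ b • 1) :
    (1 - γ • J)ᵀ * (1 - γ • J) ≤ (1 - 2 * γ * a + γ ^ 2 * b) • 1 := by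
  rw [le_iff] at ha hb ⊢
  have hgap : (1 - 2 * γ * a + γ ^ 2 * b) • 1 - (1 - γ • J)ᵀ * (1 - γ • J) =
      (2 * γ) • ((1 / 2 : ℝ) • (J + Jᵀ) - a • 1) + γ ^ 2 • (b • 1 - Jᵀ * J) := by
    simp only [transpose_sub, transpose_one, transpose_smul, sub_mul, mul_sub, one_mul, mul_one,
      smul_mul_assoc, mul_smul_comm]
    module
  rw [hgap]
  exact (ha.smul (by positivity)).add (hb.smul (by positivity))

end Matrix

/-- If the symmetric part `S = (J + Jᵀ)/2` of a real `d × d` matrix `J` satisfies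
`λ_min(S) ≥ √α` and `λ_max(JᵀJ) ≤ β`, then with `γ = √α/β` one has
`(I − γJ)ᵀ(I − γJ) ⪯ (1 − α/β)·I` in the Loewner order. -/
theorem contraction_loewner_bound
    (d : ℕ) (J S : Matrix (Fin (d + 1)) (Fin (d + 1)) ℝ) (α β γ : ℝ)
    (hSdef : S = (1 / 2 : ℝ) • (J + Jᵀ))
    (hS : S.IsHermitian) (hJ : (Jᵀ * J).IsHermitian)
    (hα : 0 < α) (hβ : 0 < β)
    (hSmin : Real.sqrt α ≤ univ.inf' univ_nonempty hS.eigenvalues)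
    (hJmax : univ.sup' univ_nonempty hJ.eigenvalues ≤ β)
    (hγ : γ = Real.sqrt α / β) :
    ((1 - α / β) • (1 : Matrix (Fin (d + 1)) (Fin (d + 1)) ℝ)
      - (1 - γ • J)ᵀ * (1 - γ • J)).PosSemidef := by
  have hSlower : Real.sqrt α • 1 ≤ S :=
    hS.smul_one_le_of_le_eigenvalues fun i => hSmin.trans (inf'_le _ (mem_univ i))
  have hJupper : Jᵀ * J ≤ β • 1 :=
    hJ.le_smul_one_of_eigenvalues_le fun i => (le_sup' _ (mem_univ i)).trans hJmax
  have hcoeff : 1 - 2 * γ * Real.sqrt α + γ ^ 2 * β = 1 - α / β := by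
    rw [hγ, div_pow, Real.sq_sqrt hα.le]
    field_simp
    rw [Real.sq_sqrt hα.le]
    ring
  have hγ0 : 0 ≤ γ := hγ ▸ by positivity
  rw [← hcoeff, ← le_iff]
  exact transpose_mul_one_sub_smul_le hγ0 (hSdef ▸ hSlower) hJupper
end

section
/- Let J be a d×d real matrix and Λ a positive diagonal matrix with entries in (0,1] and minimal entry 1/k_min-scaled structure as above. If the symmetric part of ΛJ, denoted S̃, satisfies λ_min(S̃) ≥ √α / k_min for some α with 0 < α < k_min β and λ_max(JᵀJ) ≤ β, then with γ = √α/β, (I − γΛJ)ᵀ(I − γΛJ) ⪯ (1 − α/(β k_min)) I. -/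
/-!
Write `M = ΛJ`, so that `(I - γM)ᵀ(I - γM) = I - 2γS̃ + γ²MᵀM`. In the Loewner order the eigenvalue
hypotheses say `S̃ ⪰ (√α / k_min) I` and `JᵀJ ⪯ β I`, and `Λ² ⪯ k_min⁻² I` gives
`MᵀM = JᵀΛ²J ⪯ (β / k_min²) I`. With `γ = √α / β` the product is therefore bounded by
`(1 - 2α/(β k_min) + α/(β k_min²)) I`, which is at most `(1 - α/(β k_min)) I` because `k_min ≥ 1`.
-/

open Matrix Finset
open scoped MatrixOrder

namespace Matrix

section Eigenvalues

variable {𝕜 n : Type*} [RCLike 𝕜] [Fintype n] [DecidableEq n] {A : Matrix n n 𝕜}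

theorem IsHermitian.smul_one_le_iff (hA : A.IsHermitian) {c : ℝ} :
    c • (1 : Matrix n n 𝕜) ≤ A ↔ ∀ i, c ≤ hA.eigenvalues i := by
  rw [← Algebra.algebraMap_eq_smul_one, algebraMap_le_iff_le_spectrum hA.isSelfAdjoint,
    hA.spectrum_real_eq_range_eigenvalues, Set.forall_mem_range]

theorem IsHermitian.le_smul_one_iff (hA : A.IsHermitian) {c : ℝ} :
    A ≤ c • (1 : Matrix n n 𝕜) ↔ ∀ i, hA.eigenvalues i ≤ c := by
  rw [← Algebra.algebraMap_eq_smul_one, le_algebraMap_iff_spectrum_le hA.isSelfAdjoint,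
    hA.spectrum_real_eq_range_eigenvalues, Set.forall_mem_range]

end Eigenvalues

variable {n : Type*} [Fintype n] [DecidableEq n]

theorem transpose_mul_self_diagonal_mul_le {d : n → ℝ} {c : ℝ} (hd : ∀ i, d i ^ 2 ≤ c)
    (J : Matrix n n ℝ) : (diagonal d * J)ᵀ * (diagonal d * J) ≤ c • (Jᵀ * J) := by
  have hD : diagonal d * diagonal d ≤ c • 1 := by
    rw [le_iff, diagonal_mul_diagonal, ← diagonal_one, ← diagonal_smul, diagonal_sub]
    exact posSemidef_diagonal_iff.2 fun i => by simpa [sq] using hd i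
  calc (diagonal d * J)ᵀ * (diagonal d * J) = star J * (diagonal d * diagonal d) * J := by
        simp [star_eq_conjTranspose, Matrix.mul_assoc, -diagonal_mul_diagonal]
    _ ≤ star J * (c • 1) * J := star_left_conjugate_le_conjugate hD J
    _ = c • (Jᵀ * J) := by simp [star_eq_conjTranspose]

theorem transpose_mul_self_one_sub_smul_le {M : Matrix n n ℝ} {γ μ L : ℝ} (hγ : 0 ≤ γ)
    (hS : μ • 1 ≤ (1 / 2 : ℝ) • (Mᵀ + M)) (hM : Mᵀ * M ≤ L • 1) :
    (1 - γ • M)ᵀ * (1 - γ • M) ≤ (1 - 2 * γ * μ + γ ^ 2 * L) • (1 : Matrix n n ℝ) := by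
  have expand : (1 - γ • M)ᵀ * (1 - γ • M)
      = 1 - (2 * γ) • ((1 / 2 : ℝ) • (Mᵀ + M)) + γ ^ 2 • (Mᵀ * M) := by
    simp only [transpose_sub, transpose_one, transpose_smul, Matrix.sub_mul, Matrix.mul_sub,
      Matrix.one_mul, Matrix.mul_one, Matrix.smul_mul, Matrix.mul_smul, smul_smul, smul_add]
    module
  rw [expand, add_smul, sub_smul, one_smul, mul_smul (2 * γ), mul_smul (γ ^ 2)]
  gcongr

end Matrix

theorem nonuniform_rate_loewner_bound_general
    (d : ℕ) (J Λ Stilde : Matrix (Fin (d + 1)) (Fin (d + 1)) ℝ)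
    (k : Fin (d + 1) → ℝ) (α β γ : ℝ)
    (hk : ∀ i, 1 ≤ k i)
    (hΛ : Λ = Matrix.diagonal fun i => 1 / k i)
    (hStilde : Stilde = (1 / 2 : ℝ) • ((Λ * J)ᵀ + Λ * J))
    (hS : Stilde.IsHermitian) (hJ : (Jᵀ * J).IsHermitian)
    (hα : 0 < α) (hβ : 0 < β)
    (hSmin : Real.sqrt α / univ.inf' univ_nonempty k ≤
      univ.inf' univ_nonempty hS.eigenvalues)
    (hJmax : univ.sup' univ_nonempty hJ.eigenvalues ≤ β)
    (hγ : γ = Real.sqrt α / β) :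
    ((1 - α / (β * univ.inf' univ_nonempty k)) •
        (1 : Matrix (Fin (d + 1)) (Fin (d + 1)) ℝ)
      - (1 - γ • (Λ * J))ᵀ * (1 - γ • (Λ * J))).PosSemidef := by
  set m := univ.inf' univ_nonempty k
  have hm : 1 ≤ m := le_inf' _ _ fun i _ => hk i
  have hSm : (√α / m) • 1 ≤ Stilde :=
    hS.smul_one_le_iff.2 fun i => hSmin.trans (inf'_le _ (mem_univ i))
  have hJβ : Jᵀ * J ≤ β • 1 :=
    hJ.le_smul_one_iff.2 fun i => (le_sup' _ (mem_univ i)).trans hJmax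
  have hΛ2 : ∀ i, (1 / k i) ^ 2 ≤ 1 / m ^ 2 := fun i => by
    have : m ≤ k i := inf'_le _ (mem_univ i)
    rw [div_pow, one_pow]
    gcongr
  have hΛJ : (Λ * J)ᵀ * (Λ * J) ≤ (β / m ^ 2) • 1 := calc
    _ ≤ (1 / m ^ 2) • (Jᵀ * J) := hΛ ▸ transpose_mul_self_diagonal_mul_le hΛ2 J
    _ ≤ (1 / m ^ 2) • (β • 1) := by gcongr
    _ = (β / m ^ 2) • 1 := by rw [smul_smul, one_div_mul_eq_div]
  rw [← le_iff]
  calc _ ≤ (1 - 2 * γ * (√α / m) + γ ^ 2 * (β / m ^ 2)) • 1 :=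
        transpose_mul_self_one_sub_smul_le (by rw [hγ]; positivity) (hStilde ▸ hSm) hΛJ
    _ ≤ _ := by
      gcongr ?_ • _
      have hsqrt : √α ^ 2 = α := Real.sq_sqrt hα.le
      rw [hγ, div_pow, hsqrt]
      field_simp
      nlinarith

/-- Non-uniform learning rate Loewner bound: with `Λ = diag(1/kᵢ)`, `kᵢ ≥ 1`,
`k_min = min kᵢ`, if the symmetric part `S̃` of `ΛJ` satisfies `λ_min(S̃) ≥ √α/k_min`,
`0 < α < k_min β`, `λ_max(JᵀJ) ≤ β`, then with `γ = √α/β`,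
`(I − γΛJ)ᵀ(I − γΛJ) ⪯ (1 − α/(β k_min))·I`. -/
theorem nonuniform_rate_loewner_bound
    (d : ℕ) (J Λ Stilde : Matrix (Fin (d + 1)) (Fin (d + 1)) ℝ)
    (k : Fin (d + 1) → ℝ) (α β γ : ℝ)
    (hk : ∀ i, 1 ≤ k i)
    (hΛ : Λ = Matrix.diagonal fun i => 1 / k i)
    (hStilde : Stilde = (1 / 2 : ℝ) • ((Λ * J)ᵀ + Λ * J))
    (hS : Stilde.IsHermitian) (hJ : (Jᵀ * J).IsHermitian)
    (hα : 0 < α) (hβ : 0 < β)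
    (hαβ : α < (univ.inf' univ_nonempty k) * β)
    (hSmin : Real.sqrt α / univ.inf' univ_nonempty k ≤
      univ.inf' univ_nonempty hS.eigenvalues)
    (hJmax : univ.sup' univ_nonempty hJ.eigenvalues ≤ β)
    (hγ : γ = Real.sqrt α / β) :
    ((1 - α / (β * univ.inf' univ_nonempty k)) •
        (1 : Matrix (Fin (d + 1)) (Fin (d + 1)) ℝ)
      - (1 - γ • (Λ * J))ᵀ * (1 - γ • (Λ * J))).PosSemidef :=
  nonuniform_rate_loewner_bound_general d J Λ Stilde k α β γ hk hΛ hStilde hS hJ hα hβ hSmin hJmax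
    hγ
end

section
/- Let f₁, …, fₙ : ℝ^{d₁} × ⋯ × ℝ^{dₙ} → ℝ be C² and let x* satisfy ω(x*) = 0 where ω = (D₁f₁, …, Dₙfₙ) collects partial gradients. If moreover Dᵢ²fᵢ(x*) ≻ 0 for each i (so x* is a differential Nash equilibrium), then x* is a strict local Nash equilibrium: for each i there is a neighborhood Wᵢ of xᵢ* such that fᵢ(xᵢ, x₋ᵢ*) > fᵢ(xᵢ*, x₋ᵢ*) for all xᵢ ∈ Wᵢ \ {xᵢ*}. -/
/-!
At a critical point `a` whose second derivative `Q` is positive definite, compactness of the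
unit sphere gives `c * ‖v‖ ^ 2 ≤ Q v v` for some `c > 0`. Since `Q` is the derivative of
`fderiv g` at `a`, on a small ball the directional derivative of `g` at `a + t • v` in the
direction `v` is at least `t * (c / 2) * ‖v‖ ^ 2`, so along the segment from `a` to `a + v` the
function `g` rises by at least `c / 4 * ‖v‖ ^ 2`. Each player's cost, restricted to its own
variable with the others frozen at `x*`, is such a function.
-/

open Filter Metric Set Topology

theorem ContinuousLinearMap.exists_pos_mul_sq_norm_le_apply_self {E : Type*}
    [NormedAddCommGroup E] [NormedSpace ℝ E] [FiniteDimensional ℝ E]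
    (Q : E →L[ℝ] E →L[ℝ] ℝ) (hQ : ∀ v, v ≠ 0 → 0 < Q v v) :
    ∃ c > 0, ∀ v, c * ‖v‖ ^ 2 ≤ Q v v := by
  rcases subsingleton_or_nontrivial E with _ | _
  · exact ⟨1, one_pos, fun v => by simp [Subsingleton.elim v 0]⟩
  obtain ⟨u, hu, humin⟩ : ∃ u ∈ sphere (0 : E) 1, IsMinOn (fun v => Q v v) (sphere 0 1) u :=
    (isCompact_sphere 0 1).exists_isMinOn (NormedSpace.sphere_nonempty.2 zero_le_one)
      (Q.continuous₂.comp (continuous_id.prodMk continuous_id)).continuousOn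
  refine ⟨Q u u, hQ u (ne_zero_of_mem_unit_sphere ⟨u, hu⟩), fun v => ?_⟩
  rcases eq_or_ne v 0 with rfl | hv
  · simp
  have hunit : ‖v‖⁻¹ • v ∈ sphere (0 : E) 1 := by
    simpa using norm_smul_inv_norm (𝕜 := ℝ) hv
  calc Q u u * ‖v‖ ^ 2 ≤ Q (‖v‖⁻¹ • v) (‖v‖⁻¹ • v) * ‖v‖ ^ 2 := by
        gcongr; exact humin hunit
    _ = Q v v := by
        have : ‖v‖ ≠ 0 := norm_ne_zero_iff.2 hv
        simp only [map_smul, smul_apply, smul_eq_mul]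
        field_simp

theorem add_div_two_le_of_mul_le_hasDerivAt {φ φ' : ℝ → ℝ} {K : ℝ}
    (hφ : ∀ t ∈ Icc (0 : ℝ) 1, HasDerivAt φ (φ' t) t)
    (hK : ∀ t ∈ Icc (0 : ℝ) 1, K * t ≤ φ' t) :
    φ 0 + K / 2 ≤ φ 1 := by
  have hψ : ∀ t ∈ Icc (0 : ℝ) 1, HasDerivAt (fun s => φ s - K * s ^ 2 / 2) (φ' t - K * t) t :=
    fun t ht =>
      ((hφ t ht).sub (((hasDerivAt_pow 2 t).const_mul K).div_const 2)).congr_deriv (by ring)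
  have hmono : MonotoneOn (fun s => φ s - K * s ^ 2 / 2) (Icc 0 1) := by
    refine monotoneOn_of_hasDerivWithinAt_nonneg (convex_Icc 0 1)
      (fun t ht => (hψ t ht).continuousAt.continuousWithinAt)
      (fun t ht => (hψ t (interior_subset ht)).hasDerivWithinAt)
      (fun t ht => sub_nonneg.2 (hK t (interior_subset ht)))
  have := hmono (left_mem_Icc.2 zero_le_one) (right_mem_Icc.2 zero_le_one) zero_le_one
  simp only at this
  linarith

theorem eventually_lt_of_fderiv_eq_zero_of_coercive {E : Type*}
    [NormedAddCommGroup E] [NormedSpace ℝ E] {g : E → ℝ} {a : E} {Q : E →L[ℝ] E →L[ℝ] ℝ}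
    {c : ℝ} (hc : 0 < c) (hg : ∀ᶠ x in 𝓝 a, DifferentiableAt ℝ g x)
    (hQ : HasFDerivAt (fderiv ℝ g) Q a) (hcrit : fderiv ℝ g a = 0)
    (hcoer : ∀ v, c * ‖v‖ ^ 2 ≤ Q v v) :
    ∀ᶠ x in 𝓝[≠] a, g a < g x := by
  have happrox : ∀ᶠ w in 𝓝 0, DifferentiableAt ℝ g (a + w) ∧
      ‖fderiv ℝ g (a + w) - Q w‖ ≤ c / 2 * ‖w‖ := by
    refine ((continuous_const_add a).tendsto' 0 a (add_zero a)).eventually hg |>.and ?_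
    simpa [hcrit] using (hasFDerivAt_iff_isLittleO_nhds_zero.1 hQ).bound (half_pos hc)
  obtain ⟨δ, hδ, hball⟩ := Metric.eventually_nhds_iff_ball.1 happrox
  rw [eventually_nhdsWithin_iff, Metric.eventually_nhds_iff_ball]
  refine ⟨δ, hδ, fun x hx hxa => ?_⟩
  set v := x - a
  have hv : 0 < ‖v‖ := norm_pos_iff.2 (sub_ne_zero.2 hxa)
  have hseg : ∀ t ∈ Icc (0 : ℝ) 1, t • v ∈ ball (0 : E) δ := fun t ht => by
    rw [mem_ball_zero_iff, norm_smul, Real.norm_of_nonneg ht.1]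
    exact (mul_le_of_le_one_left (norm_nonneg v) ht.2).trans_lt (mem_ball_iff_norm.1 hx)
  have hderiv : ∀ t ∈ Icc (0 : ℝ) 1,
      HasDerivAt (fun s : ℝ => g (a + s • v)) (fderiv ℝ g (a + t • v) v) t := fun t ht =>
    (hball _ (hseg t ht)).1.hasFDerivAt.comp_hasDerivAt t
      (by simpa using ((hasDerivAt_id t).smul_const v).const_add a)
  have hslope : ∀ t ∈ Icc (0 : ℝ) 1, c / 2 * ‖v‖ ^ 2 * t ≤ fderiv ℝ g (a + t • v) v := by
    intro t ht
    have hdev : |fderiv ℝ g (a + t • v) v - t * Q v v| ≤ c / 2 * ‖v‖ ^ 2 * t :=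
      calc _ = ‖(fderiv ℝ g (a + t • v) - Q (t • v)) v‖ := by simp [Real.norm_eq_abs]
        _ ≤ ‖fderiv ℝ g (a + t • v) - Q (t • v)‖ * ‖v‖ := ContinuousLinearMap.le_opNorm _ _
        _ ≤ c / 2 * ‖t • v‖ * ‖v‖ := by gcongr; exact (hball _ (hseg t ht)).2
        _ = _ := by rw [norm_smul, Real.norm_of_nonneg ht.1]; ring
    nlinarith [abs_le.1 hdev, hcoer v, ht.1]
  have hrise := add_div_two_le_of_mul_le_hasDerivAt hderiv hslope
  simp only [zero_smul, add_zero, one_smul, v, add_sub_cancel] at hrise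
  have : 0 < c / 2 * ‖v‖ ^ 2 / 2 := by positivity
  linarith

theorem eventually_lt_of_fderiv_eq_zero_of_pos {E : Type*}
    [NormedAddCommGroup E] [NormedSpace ℝ E] [FiniteDimensional ℝ E] {g : E → ℝ} {a : E}
    {Q : E →L[ℝ] E →L[ℝ] ℝ} (hg : ∀ᶠ x in 𝓝 a, DifferentiableAt ℝ g x)
    (hQ : HasFDerivAt (fderiv ℝ g) Q a) (hcrit : fderiv ℝ g a = 0)
    (hpos : ∀ v, v ≠ 0 → 0 < Q v v) :
    ∀ᶠ x in 𝓝[≠] a, g a < g x :=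
  let ⟨_, hc, hcoer⟩ := Q.exists_pos_mul_sq_norm_le_apply_self hpos
  eventually_lt_of_fderiv_eq_zero_of_coercive hc hg hQ hcrit hcoer

/-- A differential Nash equilibrium is a strict local Nash equilibrium: if each
`fᵢ` is `C²`, the partial gradient of each `fᵢ` in its own variable vanishes at `x*`,
and each block Hessian `Dᵢ²fᵢ(x*)` is positive definite, then for each `i` there is a
neighborhood `Wᵢ` of `xᵢ*` on which `fᵢ(xᵢ, x₋ᵢ*) > fᵢ(x*)` for all `xᵢ ≠ xᵢ*`. -/
theorem differential_nash_is_strict_local_nash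
    (n : ℕ) (d : Fin n → ℕ)
    (f : Fin n → ((i : Fin n) → EuclideanSpace ℝ (Fin (d i))) → ℝ)
    (xstar : (i : Fin n) → EuclideanSpace ℝ (Fin (d i)))
    (hf : ∀ i, ContDiff ℝ 2 (f i))
    (hcrit : ∀ i,
      fderiv ℝ (fun xi => f i (Function.update xstar i xi)) (xstar i) = 0)
    (hpos : ∀ i, ∀ v : EuclideanSpace ℝ (Fin (d i)), v ≠ 0 →
      0 < fderiv ℝ (fderiv ℝ fun xi => f i (Function.update xstar i xi)) (xstar i) v v) :
    ∀ i, ∃ W ∈ nhds (xstar i), ∀ xi ∈ W, xi ≠ xstar i →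
      f i xstar < f i (Function.update xstar i xi) := by
  intro i
  have hg : ContDiff ℝ 2 fun xi => f i (Function.update xstar i xi) :=
    (hf i).comp (contDiff_update 2 xstar i)
  have hmin := eventually_lt_of_fderiv_eq_zero_of_pos
    (Eventually.of_forall (hg.differentiable two_ne_zero))
    ((hg.fderiv_right one_add_one_eq_two.le).differentiable one_ne_zero _).hasFDerivAt
    (hcrit i) (hpos i)
  rw [eventually_nhdsWithin_iff] at hmin
  refine ⟨_, hmin, fun xi hxi hne => ?_⟩
  simpa using hxi hne
end
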